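/- Let p ≥ 2 and let G be a triangle-free [p+2, p]-graph of order n ≥ 2p+3 with minimum degree at least p. Then p is even, p ≥ 6, and G is isomorphic to the (p/2)-blow-up of C_5. -/

import Mathlib

open SimpleGraph

/-- A graph `G` is an `[s,t]`-graph if every induced subgraph of order `s` has at least
`t` edges. -/
def IsSTGraph {V : Type*} [Fintype V] [DecidableEq V] (G : SimpleGraph V) [DecidableRel G.Adj]
    (s t : ℕ) : Prop :=
  ∀ S : Finset V, S.card = s → t ≤ (G.induce (S : Set V)).edgeFinset.card


/-- The `k`-blow-up of a graph `H`: each vertex is replaced by `k` copies, a copy of `u` is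
adjacent to a copy of `v` iff `u` and `v` are adjacent in `H`. -/
def blowup {α : Type*} (H : SimpleGraph α) (k : ℕ) : SimpleGraph (α × Fin k) where
  Adj x y := H.Adj x.1 y.1
  symm := ⟨fun _ _ h => H.symm.symm _ _ h⟩
  loopless := ⟨fun x h => H.loopless.irrefl x.1 h⟩

instance {α : Type*} (H : SimpleGraph α) [DecidableRel H.Adj] (k : ℕ) :
    DecidableRel (blowup H k).Adj :=
  fun x y => inferInstanceAs (Decidable (H.Adj x.1 y.1))

open Finset

/-!
Counting the edges of `G[I ∪ T]` for independent sets `I`, `T`, the `[p+2, p]` condition says that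
vertices outside an independent set see many of its vertices. Together with `n ≥ 2p + 3` this rules
out independent sets of size `p + 1` (two adjacent vertices outside one would share a neighbour in
it), so `G` is `p`-regular, any two non-adjacent vertices have a common neighbour, and for every
edge `xu` the vertices outside `N(x) ∪ N(u)` are pairwise non-adjacent. These facts give an induced
`C₅`, force every vertex to be adjacent to exactly the two cycle-neighbours of some vertex `i` of the
`C₅`, and then `x ↦ i` exhibits `G` as a blow-up of `C₅`; regularity makes all five classes have
size `p / 2`.
-/

namespace SimpleGraph

lemma nonempty_embedding_of_adj_iff {V α : Type*} {G : SimpleGraph V} {H : SimpleGraph α}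
    (htwin : ∀ a b, (∀ k, H.Adj a k ↔ H.Adj b k) → a = b) (f : α → V)
    (hf : ∀ a b, G.Adj (f a) (f b) ↔ H.Adj a b) : Nonempty (H ↪g G) :=
  ⟨{ toFun := f
     inj' := fun a b hab => htwin a b fun k => by rw [← hf, ← hf, hab]
     map_rel_iff' := hf _ _ }⟩

lemma CliqueFree.not_adj_of_adj_of_adj {V : Type*} {G : SimpleGraph V} (htf : G.CliqueFree 3)
    {v a b : V} (ha : G.Adj v a) (hb : G.Adj v b) : ¬G.Adj a b := by
  classical
  exact fun hab => htf {v, a, b} (is3Clique_triple_iff.mpr ⟨ha, hb, hab⟩)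

lemma card_interedges_le_of_isIndepSet {V : Type*} [DecidableEq V] {G : SimpleGraph V}
    [DecidableRel G.Adj] {I T : Finset V} (hI : G.IsIndepSet I) (hT : G.IsIndepSet T) :
    #(G.interedges (I ∪ T) (I ∪ T)) ≤ 2 * #(G.interedges T I) := by
  have hsub : G.interedges (I ∪ T) (I ∪ T) ⊆ G.interedges T I ∪ G.interedges I T := by
    rintro ⟨a, b⟩ h
    simp only [mem_union, mk_mem_interedges_iff] at h ⊢
    obtain ⟨ha | ha, hb | hb, hab⟩ := h
    · exact absurd hab (hI ha hb (G.ne_of_adj hab))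
    · exact .inr ⟨ha, hb, hab⟩
    · exact .inl ⟨ha, hb, hab⟩
    · exact absurd hab (hT ha hb (G.ne_of_adj hab))
  calc _ ≤ #(G.interedges T I ∪ G.interedges I T) := card_le_card hsub
    _ ≤ #(G.interedges T I) + #(G.interedges I T) := card_union_le _ _
    _ = 2 * #(G.interedges T I) := by
      have : Std.Symm G.Adj := G.symm
      rw [interedges, interedges, Rel.card_interedges_comm (r := G.Adj) I T]; ring

section Finite

variable {V : Type*} [Fintype V] {G : SimpleGraph V} [DecidableRel G.Adj]

lemma CliqueFree.isIndepSet_neighborFinset (htf : G.CliqueFree 3) (v : V) :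
    G.IsIndepSet (G.neighborFinset v : Set V) := by
  rw [coe_neighborFinset]; exact G.isIndepSet_neighborSet_of_triangleFree htf v

lemma CliqueFree.disjoint_neighborFinset (htf : G.CliqueFree 3) {x u : V} (hxu : G.Adj x u) :
    Disjoint (G.neighborFinset x) (G.neighborFinset u) :=
  Finset.disjoint_left.mpr fun _ hx hu =>
    htf.not_adj_of_adj_of_adj hxu (by simpa using hx) (by simpa using hu)

lemma IsRegularOfDegree.card_neighborFinset {p : ℕ} (hreg : G.IsRegularOfDegree p) (v : V) :
    #(G.neighborFinset v) = p :=
  (card_neighborFinset_eq_degree G v).trans (hreg v)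

variable [DecidableEq V]

lemma IsRegularOfDegree.exists_ne_ne_not_adj_not_adj {p : ℕ} (hreg : G.IsRegularOfDegree p)
    (hn : 2 * p + 3 ≤ Fintype.card V) (a b x y : V) :
    ∃ z, z ≠ a ∧ z ≠ b ∧ ¬G.Adj x z ∧ ¬G.Adj y z := by
  obtain ⟨z, hz⟩ : (insert a (insert b (G.neighborFinset x ∪ G.neighborFinset y)))ᶜ.Nonempty := by
    rw [← card_pos, card_compl]
    have := card_union_le (G.neighborFinset x) (G.neighborFinset y)
    have := card_insert_le b (G.neighborFinset x ∪ G.neighborFinset y)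
    have := card_insert_le a (insert b (G.neighborFinset x ∪ G.neighborFinset y))
    rw [hreg.card_neighborFinset, hreg.card_neighborFinset] at *
    omega
  simp only [mem_compl, mem_insert, mem_union, mem_neighborFinset, not_or] at hz
  exact ⟨z, hz.1, hz.2.1, hz.2.2.1, hz.2.2.2⟩

lemma card_interedges_eq_sum (s t : Finset V) :
    #(G.interedges s t) = ∑ v ∈ s, #(G.neighborFinset v ∩ t) := by
  rw [interedges_def, card_filter, sum_product]
  refine sum_congr rfl fun v _ => ?_
  rw [← card_filter, inter_comm, ← filter_mem_eq_inter]
  simp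

lemma degree_induce_eq_card_inter (s : Finset V) (v : (s : Set V)) :
    (G.induce (s : Set V)).degree v = #(G.neighborFinset v ∩ s) := by
  have h := map_neighborFinset_induce (G := G) (s := (s : Set V)) v
  rw [toFinset_coe] at h
  rw [← card_neighborFinset_eq_degree, ← h, card_map]
  congr!

lemma two_mul_card_edgeFinset_induce (s : Finset V) :
    2 * #(G.induce (s : Set V)).edgeFinset = #(G.interedges s s) := by
  rw [← sum_degrees_eq_twice_card_edges, card_interedges_eq_sum, ← sum_coe_sort s]
  exact Fintype.sum_congr _ _ (degree_induce_eq_card_inter s)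

end Finite

lemma cycleGraph_five_adj_iff {a b : Fin 5} : (cycleGraph 5).Adj a b ↔ b = a + 1 ∨ b = a - 1 := by
  rw [cycleGraph_adj]; revert a b; decide

lemma cycleGraph_five_eq_of_forall_adj_iff {a b : Fin 5}
    (h : ∀ k, (cycleGraph 5).Adj a k ↔ (cycleGraph 5).Adj b k) : a = b := by
  revert a b; simp only [cycleGraph_adj]; decide

lemma cycleGraph_five_exists_common_adj {a b : Fin 5} (h : ¬(cycleGraph 5).Adj a b) :
    ∃ k, (cycleGraph 5).Adj a k ∧ (cycleGraph 5).Adj b k := by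
  revert a b; simp only [cycleGraph_adj]; decide

lemma cycleGraph_five_not_adj_of_adj_of_adj {a b k : Fin 5} (hab : (cycleGraph 5).Adj a b)
    (hak : (cycleGraph 5).Adj a k) : ¬(cycleGraph 5).Adj b k := by
  revert a b k; simp only [cycleGraph_adj]; decide

lemma cycleGraph_five_exists_adj_notMem_of_isIndepSet {s : Finset (Fin 5)}
    (hs : (cycleGraph 5).IsIndepSet s) : ∃ a b, (cycleGraph 5).Adj a b ∧ a ∉ s ∧ b ∉ s := by
  revert s; simp only [isIndepSet_iff, cycleGraph_adj]; decide

lemma cycleGraph_five_exists_mem_iff_adj_of_isIndepSet {s : Finset (Fin 5)}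
    (hs : (cycleGraph 5).IsIndepSet s) (h2 : 2 ≤ #s) :
    ∃ i, ∀ j, j ∈ s ↔ (cycleGraph 5).Adj i j := by
  revert s; simp only [isIndepSet_iff, cycleGraph_adj]; decide

lemma cycleGraph_five_exists_adj_of_ne_of_not_adj (j : Fin 5) :
    ∃ a b, (cycleGraph 5).Adj a b ∧ a ≠ j ∧ b ≠ j ∧
      ¬(cycleGraph 5).Adj j a ∧ ¬(cycleGraph 5).Adj j b := by
  revert j; simp only [cycleGraph_adj]; decide

lemma fin_five_two_mul_eq_of_add_eq {p : ℕ} (w : Fin 5 → ℕ)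
    (h : ∀ i, w (i + 1) + w (i - 1) = p) (i : Fin 5) : 2 * w i = p := by
  have h0 : w 1 + w 4 = p := h 0
  have h1 : w 2 + w 0 = p := h 1
  have h2 : w 3 + w 1 = p := h 2
  have h3 : w 4 + w 2 = p := h 3
  have h4 : w 0 + w 3 = p := h 4
  fin_cases i <;> simp <;> omega

lemma IsRegularOfDegree.card_fiber_add_card_fiber {V : Type*} [Fintype V] [DecidableEq V]
    {G : SimpleGraph V} [DecidableRel G.Adj] {p : ℕ} (hreg : G.IsRegularOfDegree p)
    {f : V → Fin 5} (hf : ∀ x y, G.Adj x y ↔ (cycleGraph 5).Adj (f x) (f y)) (x : V) :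
    #{y | f y = f x + 1} + #{y | f y = f x - 1} = p := by
  rw [← card_union_of_disjoint, ← hreg.card_neighborFinset x]
  · congr 1
    ext y
    simp [hf, cycleGraph_five_adj_iff]
  · exact disjoint_filter.mpr fun y _ h1 h2 =>
      (by decide : ∀ i : Fin 5, i + 1 ≠ i - 1) (f x) (h1.symm.trans h2)

end SimpleGraph

lemma Finset.card_inter_add_card_inter_le {α : Type*} [DecidableEq α] (s : Finset α)
    {t u : Finset α} (htu : Disjoint t u) : #(s ∩ t) + #(s ∩ u) ≤ #s := by
  rw [← card_union_of_disjoint (htu.mono inter_subset_right inter_subset_right),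
    ← inter_union_distrib_left]
  exact card_le_card inter_subset_left

lemma nonempty_iso_blowup {V α : Type*} [Fintype V] {G : SimpleGraph V} [DecidableEq α]
    {H : SimpleGraph α} (f : V → α) (hf : ∀ x y, G.Adj x y ↔ H.Adj (f x) (f y)) {k : ℕ}
    (hk : ∀ a, #{x | f x = a} = k) : Nonempty (G ≃g blowup H k) := by
  let e : V ≃ α × Fin k := (Equiv.sigmaFiberEquiv f).symm.trans
    ((Equiv.sigmaCongrRight fun a => Fintype.equivFinOfCardEq
      (by rw [Fintype.card_subtype]; exact hk a)).trans (Equiv.sigmaEquivProd α (Fin k)))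
  exact ⟨{ toEquiv := e, map_rel_iff' := fun {x y} => (hf x y).symm }⟩

namespace IsSTGraph

variable {V : Type*} [Fintype V] [DecidableEq V] {G : SimpleGraph V} [DecidableRel G.Adj]
  {s t : ℕ}

lemma two_mul_le_card_interedges (hst : IsSTGraph G s t) {S : Finset V} (hS : #S = s) :
    2 * t ≤ #(G.interedges S S) := by
  rw [← two_mul_card_edgeFinset_induce]
  exact Nat.mul_le_mul_left 2 (hst S hS)

lemma le_sum_card_neighborFinset_inter (hst : IsSTGraph G s t) {I T : Finset V}
    (hI : G.IsIndepSet I) (hT : G.IsIndepSet T) (hIT : Disjoint I T) (hcard : #I + #T = s) :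
    t ≤ ∑ x ∈ T, #(G.neighborFinset x ∩ I) := by
  have hlow := hst.two_mul_le_card_interedges (S := I ∪ T)
    (by rw [card_union_of_disjoint hIT, hcard])
  have hup := card_interedges_le_of_isIndepSet hI hT
  rw [card_interedges_eq_sum T I] at hup
  omega

lemma le_card_neighborFinset_inter {k : ℕ} (hst : IsSTGraph G (k + 1) t) {I : Finset V}
    (hI : G.IsIndepSet I) (hIk : #I = k) {x : V} (hx : x ∉ I) :
    t ≤ #(G.neighborFinset x ∩ I) := by
  simpa using hst.le_sum_card_neighborFinset_inter hI (T := {x}) (by simp)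
    (disjoint_singleton_right.mpr hx) (by simp [hIk])

lemma le_card_inter_add_card_inter {k : ℕ} (hst : IsSTGraph G (k + 2) t) {I : Finset V}
    (hI : G.IsIndepSet I) (hIk : #I = k) {x y : V} (hx : x ∉ I) (hy : y ∉ I) (hxy : x ≠ y)
    (hadj : ¬G.Adj x y) :
    t ≤ #(G.neighborFinset x ∩ I) + #(G.neighborFinset y ∩ I) := by
  have hT : G.IsIndepSet ({x, y} : Finset V) := by
    rw [coe_pair]; exact Set.pairwise_pair.mpr fun _ => ⟨hadj, fun h' => hadj h'.symm⟩
  have := hst.le_sum_card_neighborFinset_inter hI hT (by simp [hx, hy])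
    (by rw [card_pair hxy, hIk])
  rwa [sum_pair hxy] at this

lemma exists_adj (hst : IsSTGraph G s t) (ht : 0 < t) {S : Finset V} (hS : s ≤ #S) :
    ∃ a ∈ S, ∃ b ∈ S, G.Adj a b := by
  obtain ⟨T, hTS, hT⟩ := exists_subset_card_eq hS
  have := hst.two_mul_le_card_interedges hT
  obtain ⟨⟨a, b⟩, hab⟩ := card_pos.mp (show 0 < #(G.interedges T T) by omega)
  rw [mk_mem_interedges_iff] at hab
  exact ⟨a, hTS hab.1, b, hTS hab.2.1, hab.2.2⟩

variable {p : ℕ}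

lemma card_le_of_isIndepSet (hst : IsSTGraph G (p + 2) p) (htf : G.CliqueFree 3) (hp : 2 ≤ p)
    (hn : 2 * p + 3 ≤ Fintype.card V) {I : Finset V} (hI : G.IsIndepSet I) : #I ≤ p := by
  by_contra! hIp
  obtain ⟨J, hJI, hJ⟩ := exists_subset_card_eq (show p + 1 ≤ #I by omega)
  have hJind : G.IsIndepSet J := hI.mono (coe_subset.mpr hJI)
  obtain ⟨a, ha, b, hb, hab⟩ := hst.exists_adj (S := Jᶜ) (by omega)
    (by rw [card_compl]; omega)
  rw [mem_compl] at ha hb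
  have hna := hst.le_card_neighborFinset_inter hJind hJ ha
  have hnb := hst.le_card_neighborFinset_inter hJind hJ hb
  obtain ⟨z, hz⟩ : (G.neighborFinset a ∩ J ∩ (G.neighborFinset b ∩ J)).Nonempty := by
    rw [← card_pos]
    have := card_union_add_card_inter (G.neighborFinset a ∩ J) (G.neighborFinset b ∩ J)
    have := card_le_card
      (union_subset inter_subset_right inter_subset_right :
        G.neighborFinset a ∩ J ∪ G.neighborFinset b ∩ J ⊆ J)
    omega
  simp only [mem_inter, mem_neighborFinset] at hz
  exact htf.not_adj_of_adj_of_adj hz.1.1.symm hz.2.1.symm hab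

lemma isRegularOfDegree (hst : IsSTGraph G (p + 2) p) (htf : G.CliqueFree 3) (hp : 2 ≤ p)
    (hn : 2 * p + 3 ≤ Fintype.card V) (hdeg : p ≤ G.minDegree) : G.IsRegularOfDegree p :=
  fun v => le_antisymm
    (card_neighborFinset_eq_degree G v ▸
      hst.card_le_of_isIndepSet htf hp hn (htf.isIndepSet_neighborFinset v))
    (hdeg.trans (G.minDegree_le_degree v))

lemma exists_common_adj (hst : IsSTGraph G (p + 2) p) (htf : G.CliqueFree 3)
    (hreg : G.IsRegularOfDegree p) (hp : 0 < p) (hn : 2 * p + 3 ≤ Fintype.card V) {x y : V}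
    (hadj : ¬G.Adj x y) : ∃ z, G.Adj x z ∧ G.Adj y z := by
  by_contra! hno
  have hdisj : Disjoint (G.neighborFinset x) (G.neighborFinset y) :=
    disjoint_left.mpr fun z hx hy => hno z (by simpa using hx) (by simpa using hy)
  obtain ⟨z, hzx, hzy, hxz, hyz⟩ := hreg.exists_ne_ne_not_adj_not_adj hn x y x y
  have hx := hst.le_card_inter_add_card_inter (htf.isIndepSet_neighborFinset x)
    (hreg.card_neighborFinset x) (x := z) (y := y) (by simpa using hxz)
    (by rwa [mem_neighborFinset]) hzy (mt G.adj_symm hyz)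
  have hy := hst.le_card_inter_add_card_inter (htf.isIndepSet_neighborFinset y)
    (hreg.card_neighborFinset y) (x := z) (y := x) (by simpa using hyz)
    (by rw [mem_neighborFinset]; exact mt G.adj_symm hadj) hzx (mt G.adj_symm hxz)
  have := (G.neighborFinset z).card_inter_add_card_inter_le hdisj
  rw [disjoint_iff_inter_eq_empty.mp hdisj.symm, card_empty] at hx
  rw [disjoint_iff_inter_eq_empty.mp hdisj, card_empty] at hy
  rw [hreg.card_neighborFinset] at this
  omega

lemma neighborFinset_subset_union (hst : IsSTGraph G (p + 2) p) (htf : G.CliqueFree 3)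
    (hreg : G.IsRegularOfDegree p) {x u e r : V} (hxu : G.Adj x u)
    (he : e ∉ G.neighborFinset x ∪ G.neighborFinset u)
    (hr : r ∉ G.neighborFinset x ∪ G.neighborFinset u) (her : e ≠ r) (hadj : ¬G.Adj e r) :
    G.neighborFinset e ⊆ G.neighborFinset x ∪ G.neighborFinset u := by
  rw [mem_union, not_or] at he hr
  have hx := hst.le_card_inter_add_card_inter (htf.isIndepSet_neighborFinset x)
    (hreg.card_neighborFinset x) he.1 hr.1 her hadj
  have hu := hst.le_card_inter_add_card_inter (htf.isIndepSet_neighborFinset u)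
    (hreg.card_neighborFinset u) he.2 hr.2 her hadj
  have hdisj := htf.disjoint_neighborFinset hxu
  have hre := (G.neighborFinset r).card_inter_add_card_inter_le hdisj
  have hcard : #(G.neighborFinset e) ≤
      #(G.neighborFinset e ∩ (G.neighborFinset x ∪ G.neighborFinset u)) := by
    rw [inter_union_distrib_left,
      card_union_of_disjoint (hdisj.mono inter_subset_right inter_subset_right)]
    rw [hreg.card_neighborFinset] at hre ⊢
    omega
  exact inter_eq_left.mp (eq_of_subset_of_card_le inter_subset_left hcard)

lemma not_adj_of_notMem_union (hst : IsSTGraph G (p + 2) p) (htf : G.CliqueFree 3)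
    (hreg : G.IsRegularOfDegree p) (hn : 2 * p + 3 ≤ Fintype.card V) {x u e e' : V}
    (hxu : G.Adj x u) (he : e ∉ G.neighborFinset x ∪ G.neighborFinset u)
    (he' : e' ∉ G.neighborFinset x ∪ G.neighborFinset u) : ¬G.Adj e e' := by
  intro hee'
  obtain ⟨r, hre, hre', hxr, hur⟩ := hreg.exists_ne_ne_not_adj_not_adj hn e e' x u
  have hr : r ∉ G.neighborFinset x ∪ G.neighborFinset u := by simp [hxr, hur]
  by_cases her : G.Adj e r
  · have := hst.neighborFinset_subset_union htf hreg hxu he' hr hre'.symm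
      (htf.not_adj_of_adj_of_adj hee' her)
    exact he (this (by simpa using hee'.symm))
  · have := hst.neighborFinset_subset_union htf hreg hxu he hr hre.symm her
    exact he' (this (by simpa using hee'))

lemma nonempty_cycleGraph_five_embedding (hst : IsSTGraph G (p + 2) p) (htf : G.CliqueFree 3)
    (hreg : G.IsRegularOfDegree p) (hp : 0 < p) (hn : 2 * p + 3 ≤ Fintype.card V) :
    Nonempty (cycleGraph 5 ↪g G) := by
  obtain ⟨v⟩ : Nonempty V := Fintype.card_pos_iff.mp (by omega)
  obtain ⟨x, hx, y, hy, hxy⟩ := hst.exists_adj hp (S := (insert v (G.neighborFinset v))ᶜ) (by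
    rw [card_compl]
    have := card_insert_le v (G.neighborFinset v)
    rw [hreg.card_neighborFinset] at this
    omega)
  simp only [mem_compl, mem_insert, mem_neighborFinset, not_or] at hx hy
  obtain ⟨a, hva, hxa⟩ := hst.exists_common_adj htf hreg hp hn hx.2
  obtain ⟨b, hvb, hyb⟩ := hst.exists_common_adj htf hreg hp hn hy.2
  have hay : ¬G.Adj a y := htf.not_adj_of_adj_of_adj hxa hxy
  have hab : ¬G.Adj a b := htf.not_adj_of_adj_of_adj hva hvb
  have hxb : ¬G.Adj x b := htf.not_adj_of_adj_of_adj hxy.symm hyb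
  refine nonempty_embedding_of_adj_iff (fun _ _ => cycleGraph_five_eq_of_forall_adj_iff)
    ![v, a, x, y, b] fun i j => ?_
  fin_cases i <;> fin_cases j <;>
    simp [cycleGraph_adj, hva, hva.symm, hxa, hxa.symm, hxy, hxy.symm, hyb, hyb.symm, hvb,
      hvb.symm, hx.2, mt G.adj_symm hx.2, hy.2, mt G.adj_symm hy.2, hay, mt G.adj_symm hay, hab,
      mt G.adj_symm hab, hxb, mt G.adj_symm hxb] <;> decide

lemma exists_adj_embedding_iff (hst : IsSTGraph G (p + 2) p) (htf : G.CliqueFree 3)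
    (hreg : G.IsRegularOfDegree p) (hp : 0 < p) (hn : 2 * p + 3 ≤ Fintype.card V)
    (c : cycleGraph 5 ↪g G) (x : V) : ∃ i, ∀ j, G.Adj x (c j) ↔ (cycleGraph 5).Adj i j := by
  let trace (y : V) : Finset (Fin 5) := {j | G.Adj y (c j)}
  have mem_trace {y : V} {j : Fin 5} : j ∈ trace y ↔ G.Adj y (c j) := by simp [trace]
  have htrace (y : V) : (cycleGraph 5).IsIndepSet (trace y) := fun a ha b hb _ hab =>
    htf.not_adj_of_adj_of_adj (mem_trace.mp ha) (mem_trace.mp hb) (c.map_adj_iff.mpr hab)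
  have hcover {y u : V} (hyu : G.Adj y u) {a b : Fin 5} (hab : (cycleGraph 5).Adj a b)
      (ha : ¬G.Adj y (c a) ∧ ¬G.Adj u (c a)) (hb : ¬G.Adj y (c b) ∧ ¬G.Adj u (c b)) : False :=
    hst.not_adj_of_notMem_union htf hreg hn hyu (by simpa using ha) (by simpa using hb)
      (c.map_adj_iff.mpr hab)
  suffices h2 : 2 ≤ #(trace x) by
    obtain ⟨i, hi⟩ := cycleGraph_five_exists_mem_iff_adj_of_isIndepSet (htrace x) h2
    exact ⟨i, fun j => mem_trace.symm.trans (hi j)⟩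
  by_contra! hlt
  obtain ⟨j, hj⟩ := card_le_one_iff_subset_singleton.mp (Nat.le_of_lt_succ hlt)
  have hxj {k : Fin 5} (hk : k ≠ j) : ¬G.Adj x (c k) := fun h =>
    hk (mem_singleton.mp (hj (mem_trace.mpr h)))
  by_cases hx : G.Adj x (c j)
  · obtain ⟨a, b, hab, haj, hbj, hja, hjb⟩ := cycleGraph_five_exists_adj_of_ne_of_not_adj j
    exact hcover hx hab ⟨hxj haj, mt c.map_adj_iff.mp hja⟩ ⟨hxj hbj, mt c.map_adj_iff.mp hjb⟩
  · have hxc (k : Fin 5) : ¬G.Adj x (c k) := by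
      obtain rfl | hk := eq_or_ne k j
      exacts [hx, hxj hk]
    obtain ⟨w, hxw⟩ := G.degree_pos_iff_exists_adj x |>.mp (by rw [hreg x]; exact hp)
    obtain ⟨a, b, hab, ha, hb⟩ := cycleGraph_five_exists_adj_notMem_of_isIndepSet (htrace w)
    exact hcover hxw hab ⟨hxc a, mt mem_trace.mpr ha⟩ ⟨hxc b, mt mem_trace.mpr hb⟩

lemma adj_iff_cycleGraph_adj (hst : IsSTGraph G (p + 2) p) (htf : G.CliqueFree 3)
    (hreg : G.IsRegularOfDegree p) (hp : 0 < p) (hn : 2 * p + 3 ≤ Fintype.card V)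
    (c : cycleGraph 5 ↪g G) {f : V → Fin 5} (hf : ∀ x j, G.Adj x (c j) ↔ (cycleGraph 5).Adj (f x) j)
    (x y : V) : G.Adj x y ↔ (cycleGraph 5).Adj (f x) (f y) := by
  have adj_of_adj {x y : V} (hxy : G.Adj x y) : (cycleGraph 5).Adj (f x) (f y) := by
    by_contra h
    obtain ⟨k, hxk, hyk⟩ := cycleGraph_five_exists_common_adj h
    exact htf.not_adj_of_adj_of_adj ((hf x k).mpr hxk).symm ((hf y k).mpr hyk).symm hxy
  refine ⟨adj_of_adj, fun h => ?_⟩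
  by_contra hxy
  obtain ⟨z, hxz, hyz⟩ := hst.exists_common_adj htf hreg hp hn hxy
  exact cycleGraph_five_not_adj_of_adj_of_adj h (adj_of_adj hxz) (adj_of_adj hyz)

end IsSTGraph

/-- a triangle-free `[p+2, p]`-graph of order `n ≥ 2p+3` with minimum degree at
least `p ≥ 2` satisfies: `p` is even, `p ≥ 6`, and `G ≅ C₅^{(p/2)}`. -/
theorem triangle_free_st_graph_classification {V : Type*} [Fintype V] [DecidableEq V]
    (G : SimpleGraph V) [DecidableRel G.Adj] (p n : ℕ) (hp : 2 ≤ p)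
    (horder : Fintype.card V = n) (hn : 2 * p + 3 ≤ n)
    (hst : IsSTGraph G (p + 2) p) (htf : G.CliqueFree 3)
    (hdeg : p ≤ G.minDegree) :
    Even p ∧ 6 ≤ p ∧ Nonempty (G ≃g blowup (cycleGraph 5) (p / 2)) := by
  subst horder
  have hreg := hst.isRegularOfDegree htf hp hn hdeg
  obtain ⟨c⟩ := hst.nonempty_cycleGraph_five_embedding htf hreg (by omega) hn
  choose f hf using hst.exists_adj_embedding_iff htf hreg (by omega) hn c
  have hadj := hst.adj_iff_cycleGraph_adj htf hreg (by omega) hn c hf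
  have hfc (i : Fin 5) : f (c i) = i :=
    cycleGraph_five_eq_of_forall_adj_iff fun k => by rw [← hf, c.map_adj_iff]
  have hfiber := fin_five_two_mul_eq_of_add_eq (fun i => #{x | f x = i}) fun i => by
    simpa [hfc] using hreg.card_fiber_add_card_fiber hadj (c i)
  have hk (i : Fin 5) : #{x | f x = i} = p / 2 := by have := hfiber i; omega
  have hcard : Fintype.card V = 5 * (p / 2) := by
    rw [← card_univ, card_eq_sum_card_fiberwise fun x _ => mem_univ (f x)]
    simp [hk]
  have := hfiber 0
  exact ⟨⟨p / 2, by omega⟩, by omega, nonempty_iso_blowup f hadj hk⟩
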